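/- arXiv:math/9801141 — 5 statements merged into one kernel-verified Lean document; each statement's English description precedes it below -/
import Mathlib

section
/- In the quantum Clifford algebra C_q(2n), for each index i (1 ≤ i ≤ n) the identity q^{-2}·Y_i·Y_i* + Y_i*·Y_i + (1−q^{-2})·q^{2ρ_i}·( Σ_{j=1}^{n} Y_j·Y_j* + Σ_{j>i} q^{-2ρ_j}·Y_j*·Y_j ) = q^{2ρ_i}·1 holds, where ρ_i = n−i. -/
/-- Lemma 9.13: in the quantum Clifford algebra `C_q(2n)` — i.e. in any unital
associative `K`-algebra with elements `Y i` and `Y* i = Z i` satisfying the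
defining relations (9.6) — the identity
`q^{-2}·Yᵢ·Yᵢ* + Yᵢ*·Yᵢ + (1−q^{-2})·q^{2ρᵢ}·(Σⱼ Yⱼ·Yⱼ* + Σ_{j>i} q^{-2ρⱼ}·Yⱼ*·Yⱼ)
  = q^{2ρᵢ}·1` holds, where `ρᵢ = n − i` (for `1 ≤ i ≤ n`; with `Fin n`
indexing, `ρ` of the index `i` is `n - 1 - i`). -/
theorem quantum_clifford_lemma
    {K : Type*} [Field K] (q : K) (hq : q ≠ 0)
    (hroot : ∀ m : ℕ, m ≠ 0 → q ^ m ≠ 1)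
    {A : Type*} [Ring A] [Algebra K A] (n : ℕ)
    (Y Z : Fin n → A)
    (rel1 : ∀ i j : Fin n, j < i → Y i * Y j = (-q⁻¹) • (Y j * Y i))
    (rel2 : ∀ i j : Fin n, j < i → Z i * Z j = (-q) • (Z j * Z i))
    (rel3 : ∀ i : Fin n, Y i * Y i = 0)
    (rel4 : ∀ i : Fin n, Z i * Z i = 0)
    (rel5 : ∀ i j : Fin n, i ≠ j → Y i * Z j = (-q) • (Z j * Y i))
    (rel6 : ∀ i : Fin n, Y i * Z i + Z i * Y i
      = (q⁻¹ ^ 2 - 1) • (∑ j ∈ Finset.Iio i, Y j * Z j) + 1) :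
    ∀ i : Fin n,
      (q⁻¹ ^ 2) • (Y i * Z i) + Z i * Y i
        + ((1 - q⁻¹ ^ 2) * q ^ (2 * (n - 1 - (i : ℕ)))) •
            ((∑ j, Y j * Z j)
              + ∑ j ∈ Finset.Ioi i, (q⁻¹ ^ (2 * (n - 1 - (j : ℕ)))) • (Z j * Y j))
      = (q ^ (2 * (n - 1 - (i : ℕ)))) • (1 : A) := by
  obtain _ | m := n
  · exact fun i => i.elim0
  intro i
  induction' i using Fin.reverseInduction with i IH
  · -- base case i = last m
    have h1 : Finset.Ioi (Fin.last m) = (∅ : Finset (Fin (m+1))) := by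
      ext j; simp [Fin.lt_iff_val_lt_val, Fin.val_last]
      omega
    have h2 : Finset.Iio (Fin.last m) = Finset.univ.erase (Fin.last m) := by
      ext j
      have := j.is_lt
      have hl : (Fin.last m).val = m := rfl
      simp only [Finset.mem_Iio, Finset.mem_erase, Finset.mem_univ, and_true,
        Fin.lt_iff_val_lt_val, Fin.ext_iff, Fin.val_last]
      omega
    have h3 : (∑ j ∈ Finset.Iio (Fin.last m), Y j * Z j) + Y (Fin.last m) * Z (Fin.last m)
        = ∑ j, Y j * Z j := by
      rw [h2]; exact Finset.sum_erase_add _ _ (Finset.mem_univ _)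
    have h6 := rel6 (Fin.last m)
    have hv : (m + 1 - 1 - ((Fin.last m : Fin (m+1)) : ℕ)) = 0 := by simp
    rw [h1, hv]
    simp only [Finset.sum_empty, add_zero, pow_zero, mul_one]
    linear_combination (norm := module) h6 - (1 - q⁻¹^2) • h3
  · -- step: from i.succ to i.castSucc
    have hlt : i.castSucc < i.succ := Fin.castSucc_lt_succ
    have hIio : Finset.Iio (i.succ) = insert i.castSucc (Finset.Iio i.castSucc) := by
      ext j
      simp only [Finset.mem_Iio, Finset.mem_insert, Fin.lt_iff_val_lt_val, Fin.ext_iff,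
        Fin.val_succ, Fin.coe_castSucc]
      omega
    have hIoi : Finset.Ioi (i.castSucc) = insert i.succ (Finset.Ioi i.succ) := by
      ext j
      simp only [Finset.mem_Ioi, Finset.mem_insert, Fin.lt_iff_val_lt_val, Fin.ext_iff,
        Fin.val_succ, Fin.coe_castSucc]
      omega
    have hnmS : i.succ ∉ Finset.Ioi i.succ :=
      fun h => absurd (Finset.mem_Ioi.mp h) (lt_irrefl _)
    have hnmI : i.castSucc ∉ Finset.Iio i.castSucc :=
      fun h => absurd (Finset.mem_Iio.mp h) (lt_irrefl _)
    set e : ℕ := m - (i + 1) with he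
    have hvs : (m + 1 - 1 - ((i.succ : Fin (m+1)) : ℕ)) = e := by simp [he]
    have hvc : (m + 1 - 1 - ((i.castSucc : Fin (m+1)) : ℕ)) = e + 1 := by
      simp [he, Fin.coe_castSucc]
      omega
    rw [hvs] at IH
    rw [hvc, hIoi, Finset.sum_insert hnmS, hvs]
    have h6c := rel6 i.castSucc
    have h6s := rel6 i.succ
    rw [hIio, Finset.sum_insert hnmI] at h6s
    have hpow : q ^ (2 * (e + 1)) = q ^ (2 * e) * q ^ 2 := by ring
    rw [hpow, inv_pow q (2 * e)]
    linear_combination (norm :=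
        match_scalars <;> (field_simp; try ring)) h6c - h6s + (q^2) • IH
end

section
/- In the quantum octonion algebra O_q, the element e = e₁ + e₂ (with e₁ = q^{-1/2}x₄, e₂ = −q^{1/2}x₋₄) satisfies e·x₁ = q²x₁, x₁·e = q^{-2}x₁, e·x₋₁ = q^{-2}x₋₁, x₋₁·e = q²x₋₁, and e acts as a two-sided identity on the span of x₂, x₃, x₋₂, x₋₃, e₁, e₂. Consequently e is a two-sided identity element of O_q if and only if q² = 1. -/
/-- Basis vector `x_k` of the 8-dimensional space. Index correspondence:
`0 ↦ x₁, 1 ↦ x₂, 2 ↦ x₃, 3 ↦ x₄, 4 ↦ x₋₄, 5 ↦ x₋₃, 6 ↦ x₋₂, 7 ↦ x₋₁`. -/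
noncomputable def bx {K : Type*} [Field K] (k : Fin 8) : Fin 8 → K := Pi.single k 1

/-- Structure constants of the quantum octonion algebra (Table 3.9),
with `s = q^{1/2}`. -/
noncomputable def octTab {K : Type*} [Field K] (s : K) : Fin 8 → Fin 8 → Fin 8 → K :=
  ![![0, 0, 0, s⁻¹^3 • bx 0, 0, s⁻¹^3 • bx 1, s⁻¹^3 • bx 2, s⁻¹^3 • bx 4],
    ![0, 0, (-s⁻¹) • bx 0, 0, (-s⁻¹) • bx 1, 0, s⁻¹^3 • bx 3, s⁻¹^3 • bx 5],
    ![0, s • bx 0, 0, 0, (-s⁻¹) • bx 2, (-s⁻¹) • bx 3, 0, s⁻¹^3 • bx 6],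
    ![0, s • bx 1, s • bx 2, s • bx 3, 0, 0, 0, s⁻¹^3 • bx 7],
    ![(-s^3) • bx 0, 0, 0, 0, (-s⁻¹) • bx 4, (-s⁻¹) • bx 5, (-s⁻¹) • bx 6, 0],
    ![(-s^3) • bx 1, 0, s • bx 4, s • bx 5, 0, 0, (-s⁻¹) • bx 7, 0],
    ![(-s^3) • bx 2, (-s^3) • bx 4, 0, s • bx 6, 0, s • bx 7, 0, 0],
    ![(-s^3) • bx 3, (-s^3) • bx 5, (-s^3) • bx 6, 0, (-s^3) • bx 7, 0, 0, 0]]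

/-- The quantum octonion multiplication (Table 3.9), extended bilinearly. -/
noncomputable def octMul {K : Type*} [Field K] (s : K) (a b : Fin 8 → K) : Fin 8 → K :=
  ∑ i : Fin 8, ∑ j : Fin 8, (a i * b j) • octTab s i j

section Aux

variable {K : Type*} [Field K] (s : K)

lemma octMul_bx (i j : Fin 8) : octMul s (bx i) (bx j) = octTab s i j := by
  unfold octMul bx
  simp [Pi.single_apply, ite_mul, mul_ite, ite_smul]

lemma octMul_add_left (a b v : Fin 8 → K) :
    octMul s (a + b) v = octMul s a v + octMul s b v := by
  unfold octMul
  simp [add_mul, add_smul, Finset.sum_add_distrib]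

lemma octMul_add_right (a b v : Fin 8 → K) :
    octMul s v (a + b) = octMul s v a + octMul s v b := by
  unfold octMul
  simp [mul_add, add_smul, Finset.sum_add_distrib]

lemma octMul_smul_left (c : K) (a v : Fin 8 → K) :
    octMul s (c • a) v = c • octMul s a v := by
  unfold octMul
  simp [Finset.smul_sum, mul_assoc, mul_smul, smul_eq_mul]

lemma octMul_smul_right (c : K) (a v : Fin 8 → K) :
    octMul s v (c • a) = c • octMul s v a := by
  unfold octMul
  simp [Finset.smul_sum, mul_smul, smul_eq_mul, mul_left_comm]

lemma octMul_e_bx (j : Fin 8) :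
    octMul s (s⁻¹ • bx 3 + (-s) • bx 4) (bx j)
      = s⁻¹ • octTab s 3 j + (-s) • octTab s 4 j := by
  rw [octMul_add_left, octMul_smul_left, octMul_smul_left, octMul_bx, octMul_bx]

lemma octMul_bx_e (i : Fin 8) :
    octMul s (bx i) (s⁻¹ • bx 3 + (-s) • bx 4)
      = s⁻¹ • octTab s i 3 + (-s) • octTab s i 4 := by
  rw [octMul_add_right, octMul_smul_right, octMul_smul_right, octMul_bx, octMul_bx]

variable {s}

lemma eL0 : octMul s (s⁻¹ • bx 3 + (-s) • bx 4) (bx 0) = (s^2)^2 • (bx 0 : Fin 8 → K) := by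
  rw [octMul_e_bx]
  show s⁻¹ • (0 : Fin 8 → K) + (-s) • ((-s^3) • bx 0) = _
  rw [smul_zero, zero_add, smul_smul]
  congr 1
  ring

lemma eL1 (hs : s ≠ 0) : octMul s (s⁻¹ • bx 3 + (-s) • bx 4) (bx 1) = (bx 1 : Fin 8 → K) := by
  rw [octMul_e_bx]
  show s⁻¹ • (s • bx 1) + (-s) • (0 : Fin 8 → K) = _
  rw [smul_zero, add_zero, smul_smul, inv_mul_cancel₀ hs, one_smul]

lemma eL2 (hs : s ≠ 0) : octMul s (s⁻¹ • bx 3 + (-s) • bx 4) (bx 2) = (bx 2 : Fin 8 → K) := by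
  rw [octMul_e_bx]
  show s⁻¹ • (s • bx 2) + (-s) • (0 : Fin 8 → K) = _
  rw [smul_zero, add_zero, smul_smul, inv_mul_cancel₀ hs, one_smul]

lemma eL3 (hs : s ≠ 0) : octMul s (s⁻¹ • bx 3 + (-s) • bx 4) (bx 3) = (bx 3 : Fin 8 → K) := by
  rw [octMul_e_bx]
  show s⁻¹ • (s • bx 3) + (-s) • (0 : Fin 8 → K) = _
  rw [smul_zero, add_zero, smul_smul, inv_mul_cancel₀ hs, one_smul]

lemma eL4 (hs : s ≠ 0) : octMul s (s⁻¹ • bx 3 + (-s) • bx 4) (bx 4) = (bx 4 : Fin 8 → K) := by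
  rw [octMul_e_bx]
  show s⁻¹ • (0 : Fin 8 → K) + (-s) • ((-s⁻¹) • bx 4) = _
  rw [smul_zero, zero_add, smul_smul, neg_mul_neg, mul_inv_cancel₀ hs, one_smul]

lemma eL5 (hs : s ≠ 0) : octMul s (s⁻¹ • bx 3 + (-s) • bx 4) (bx 5) = (bx 5 : Fin 8 → K) := by
  rw [octMul_e_bx]
  show s⁻¹ • (0 : Fin 8 → K) + (-s) • ((-s⁻¹) • bx 5) = _
  rw [smul_zero, zero_add, smul_smul, neg_mul_neg, mul_inv_cancel₀ hs, one_smul]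

lemma eL6 (hs : s ≠ 0) : octMul s (s⁻¹ • bx 3 + (-s) • bx 4) (bx 6) = (bx 6 : Fin 8 → K) := by
  rw [octMul_e_bx]
  show s⁻¹ • (0 : Fin 8 → K) + (-s) • ((-s⁻¹) • bx 6) = _
  rw [smul_zero, zero_add, smul_smul, neg_mul_neg, mul_inv_cancel₀ hs, one_smul]

lemma eL7 (hs : s ≠ 0) : octMul s (s⁻¹ • bx 3 + (-s) • bx 4) (bx 7) = ((s^2)^2)⁻¹ • (bx 7 : Fin 8 → K) := by
  rw [octMul_e_bx]
  show s⁻¹ • (s⁻¹^3 • bx 7) + (-s) • (0 : Fin 8 → K) = _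
  rw [smul_zero, add_zero, smul_smul]
  congr 1
  field_simp

lemma eR0 (hs : s ≠ 0) : octMul s (bx 0) (s⁻¹ • bx 3 + (-s) • bx 4) = ((s^2)^2)⁻¹ • (bx 0 : Fin 8 → K) := by
  rw [octMul_bx_e]
  show s⁻¹ • (s⁻¹^3 • bx 0) + (-s) • (0 : Fin 8 → K) = _
  rw [smul_zero, add_zero, smul_smul]
  congr 1
  field_simp

lemma eR1 (hs : s ≠ 0) : octMul s (bx 1) (s⁻¹ • bx 3 + (-s) • bx 4) = (bx 1 : Fin 8 → K) := by
  rw [octMul_bx_e]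
  show s⁻¹ • (0 : Fin 8 → K) + (-s) • ((-s⁻¹) • bx 1) = _
  rw [smul_zero, zero_add, smul_smul, neg_mul_neg, mul_inv_cancel₀ hs, one_smul]

lemma eR2 (hs : s ≠ 0) : octMul s (bx 2) (s⁻¹ • bx 3 + (-s) • bx 4) = (bx 2 : Fin 8 → K) := by
  rw [octMul_bx_e]
  show s⁻¹ • (0 : Fin 8 → K) + (-s) • ((-s⁻¹) • bx 2) = _
  rw [smul_zero, zero_add, smul_smul, neg_mul_neg, mul_inv_cancel₀ hs, one_smul]

lemma eR3 (hs : s ≠ 0) : octMul s (bx 3) (s⁻¹ • bx 3 + (-s) • bx 4) = (bx 3 : Fin 8 → K) := by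
  rw [octMul_bx_e]
  show s⁻¹ • (s • bx 3) + (-s) • (0 : Fin 8 → K) = _
  rw [smul_zero, add_zero, smul_smul, inv_mul_cancel₀ hs, one_smul]

lemma eR4 (hs : s ≠ 0) : octMul s (bx 4) (s⁻¹ • bx 3 + (-s) • bx 4) = (bx 4 : Fin 8 → K) := by
  rw [octMul_bx_e]
  show s⁻¹ • (0 : Fin 8 → K) + (-s) • ((-s⁻¹) • bx 4) = _
  rw [smul_zero, zero_add, smul_smul, neg_mul_neg, mul_inv_cancel₀ hs, one_smul]

lemma eR5 (hs : s ≠ 0) : octMul s (bx 5) (s⁻¹ • bx 3 + (-s) • bx 4) = (bx 5 : Fin 8 → K) := by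
  rw [octMul_bx_e]
  show s⁻¹ • (s • bx 5) + (-s) • (0 : Fin 8 → K) = _
  rw [smul_zero, add_zero, smul_smul, inv_mul_cancel₀ hs, one_smul]

lemma eR6 (hs : s ≠ 0) : octMul s (bx 6) (s⁻¹ • bx 3 + (-s) • bx 4) = (bx 6 : Fin 8 → K) := by
  rw [octMul_bx_e]
  show s⁻¹ • (s • bx 6) + (-s) • (0 : Fin 8 → K) = _
  rw [smul_zero, add_zero, smul_smul, inv_mul_cancel₀ hs, one_smul]

lemma eR7 : octMul s (bx 7) (s⁻¹ • bx 3 + (-s) • bx 4) = (s^2)^2 • (bx 7 : Fin 8 → K) := by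
  rw [octMul_bx_e]
  show s⁻¹ • (0 : Fin 8 → K) + (-s) • ((-s^3) • bx 7) = _
  rw [smul_zero, zero_add, smul_smul]
  congr 1
  ring

lemma octMul_zero_right (a : Fin 8 → K) : octMul s a 0 = 0 := by
  unfold octMul; simp

lemma octMul_zero_left (a : Fin 8 → K) : octMul s 0 a = 0 := by
  unfold octMul; simp

lemma pi_eq_sum_bx (v : Fin 8 → K) : v = ∑ j, v j • bx j := by
  funext k
  simp [bx, Pi.single_apply, mul_ite]

lemma octMul_sum_right (a : Fin 8 → K) (f : Fin 8 → Fin 8 → K) :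
    octMul s a (∑ j, f j) = ∑ j, octMul s a (f j) :=
  map_sum (AddMonoidHom.mk' (fun b => octMul s a b)
    (fun x y => octMul_add_right s x y a)) f Finset.univ

lemma octMul_sum_left (a : Fin 8 → K) (f : Fin 8 → Fin 8 → K) :
    octMul s (∑ j, f j) a = ∑ j, octMul s (f j) a :=
  map_sum (AddMonoidHom.mk' (fun b => octMul s b a)
    (fun x y => octMul_add_left s x y a)) f Finset.univ

end Aux

/-- With `e = e₁ + e₂` (where `e₁ = q^{-1/2}x₄`, `e₂ = −q^{1/2}x₋₄`, `q = s²`):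
`e·x₁ = q²x₁`, `x₁·e = q^{-2}x₁`, `e·x₋₁ = q^{-2}x₋₁`, `x₋₁·e = q²x₋₁`,
`e` is a two-sided identity on the span of `x₂,x₃,x₋₂,x₋₃,e₁,e₂`, and `e` is a
two-sided identity of `O_q` iff `q² = 1`. -/
theorem quantum_octonion_e_identity_iff
    {K : Type*} [Field K] (s : K) (hs : s ≠ 0) :
    octMul s (s⁻¹ • bx 3 + (-s) • bx 4) (bx 0) = (s^2)^2 • bx 0 ∧
    octMul s (bx 0) (s⁻¹ • bx 3 + (-s) • bx 4) = ((s^2)^2)⁻¹ • bx 0 ∧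
    octMul s (s⁻¹ • bx 3 + (-s) • bx 4) (bx 7) = ((s^2)^2)⁻¹ • bx 7 ∧
    octMul s (bx 7) (s⁻¹ • bx 3 + (-s) • bx 4) = (s^2)^2 • bx 7 ∧
    (∀ v ∈ Submodule.span K
        ({bx 1, bx 2, bx 5, bx 6, s⁻¹ • bx 3, (-s) • bx 4} : Set (Fin 8 → K)),
      octMul s (s⁻¹ • bx 3 + (-s) • bx 4) v = v ∧
      octMul s v (s⁻¹ • bx 3 + (-s) • bx 4) = v) ∧
    ((∀ v : Fin 8 → K,
        octMul s (s⁻¹ • bx 3 + (-s) • bx 4) v = v ∧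
        octMul s v (s⁻¹ • bx 3 + (-s) • bx 4) = v) ↔ (s^2)^2 = 1) := by
  refine ⟨eL0, eR0 hs, eL7 hs, eR7, ?_, ?_, ?_⟩
  · -- span part
    intro v hv
    induction hv using Submodule.span_induction with
    | mem x hx =>
      rcases hx with h | h | h | h | h | h <;> subst h
      · exact ⟨eL1 hs, eR1 hs⟩
      · exact ⟨eL2 hs, eR2 hs⟩
      · exact ⟨eL5 hs, eR5 hs⟩
      · exact ⟨eL6 hs, eR6 hs⟩
      · constructor
        · rw [octMul_smul_right, eL3 hs]
        · rw [octMul_smul_left, eR3 hs]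
      · constructor
        · rw [octMul_smul_right, eL4 hs]
        · rw [octMul_smul_left, eR4 hs]
    | zero => exact ⟨octMul_zero_right _, octMul_zero_left _⟩
    | add x y _ _ hx hy =>
      refine ⟨?_, ?_⟩
      · rw [octMul_add_right, hx.1, hy.1]
      · rw [octMul_add_left, hx.2, hy.2]
    | smul c x _ hx =>
      refine ⟨?_, ?_⟩
      · rw [octMul_smul_right, hx.1]
      · rw [octMul_smul_left, hx.2]
  · -- forward direction of the iff
    intro H
    have h0 := (H (bx 0)).1
    rw [eL0] at h0
    have := congr_fun h0 0
    simpa [bx, Pi.single_apply] using this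
  · -- backward direction of the iff
    intro hq v
    have hL : ∀ j : Fin 8, octMul s (s⁻¹ • bx 3 + (-s) • bx 4) (bx j) = bx j := by
      intro j
      fin_cases j
      · show octMul s (s⁻¹ • bx 3 + (-s) • bx 4) (bx 0) = bx 0
        rw [eL0, hq, one_smul]
      · exact eL1 hs
      · exact eL2 hs
      · exact eL3 hs
      · exact eL4 hs
      · exact eL5 hs
      · exact eL6 hs
      · show octMul s (s⁻¹ • bx 3 + (-s) • bx 4) (bx 7) = bx 7
        rw [eL7 hs, hq, inv_one, one_smul]
    have hR : ∀ j : Fin 8, octMul s (bx j) (s⁻¹ • bx 3 + (-s) • bx 4) = bx j := by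
      intro j
      fin_cases j
      · show octMul s (bx 0) (s⁻¹ • bx 3 + (-s) • bx 4) = bx 0
        rw [eR0 hs, hq, inv_one, one_smul]
      · exact eR1 hs
      · exact eR2 hs
      · exact eR3 hs
      · exact eR4 hs
      · exact eR5 hs
      · exact eR6 hs
      · show octMul s (bx 7) (s⁻¹ • bx 3 + (-s) • bx 4) = bx 7
        rw [eR7, hq, one_smul]
    constructor
    · conv_lhs => rw [pi_eq_sum_bx v, octMul_sum_right]
      conv_rhs => rw [pi_eq_sum_bx v]
      refine Finset.sum_congr rfl fun j _ => ?_
      rw [octMul_smul_right, hL j]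
    · conv_lhs => rw [pi_eq_sum_bx v, octMul_sum_left]
      conv_rhs => rw [pi_eq_sum_bx v]
      refine Finset.sum_congr rfl fun j _ => ?_
      rw [octMul_smul_left, hR j]
end

section
/- Conversely, for any scalars b, c ∈ K, the linear map d on O_q defined by d(e₁) = 0 = d(e₂), d(x₁) = b·x₁, d(x₋₁) = −b·x₋₁, d(x₂) = c·x₂, d(x₋₂) = −c·x₋₂, d(x₃) = (b−c)·x₃, d(x₋₃) = −(b−c)·x₋₃ is a derivation of the quantum octonion algebra O_q. -/
/-- Conversely, for any scalars `b, c`, the linear map defined on the basis by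
(6.3) (and killing `e₁, e₂`) is a derivation of the quantum octonion algebra. -/
theorem quantum_octonion_derivation_of_scalars
    {K : Type*} [Field K] (s : K) (hs : s ≠ 0) (b c : K)
    (d : (Fin 8 → K) →ₗ[K] (Fin 8 → K))
    (he1 : d (s⁻¹ • bx 3) = 0) (he2 : d ((-s) • bx 4) = 0)
    (h1 : d (bx 0) = b • bx 0) (h7 : d (bx 7) = (-b) • bx 7)
    (h2 : d (bx 1) = c • bx 1) (h6 : d (bx 6) = (-c) • bx 6)
    (h3 : d (bx 2) = (b - c) • bx 2) (h5 : d (bx 5) = (-(b - c)) • bx 5) :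
    ∀ x y : Fin 8 → K, d (octMul s x y) = octMul s (d x) y + octMul s x (d y) := by
  have hd3 : d (bx 3) = 0 := by
    rw [map_smul, smul_eq_zero] at he1
    exact he1.resolve_left (inv_ne_zero hs)
  have hd4 : d (bx 4) = 0 := by
    rw [map_smul, smul_eq_zero] at he2
    exact he2.resolve_left (neg_ne_zero.mpr hs)
  set lam : Fin 8 → K := ![b, c, b - c, 0, 0, -(b - c), -c, -b] with hlam
  have l0 : lam 0 = b := rfl
  have l1 : lam 1 = c := rfl
  have l2 : lam 2 = b - c := rfl
  have l3 : lam 3 = 0 := rfl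
  have l4 : lam 4 = 0 := rfl
  have l5 : lam 5 = -(b - c) := rfl
  have l6 : lam 6 = -c := rfl
  have l7 : lam 7 = -b := rfl
  have t00 : octTab s 0 0 = (0 : Fin 8 → K) := rfl
  have t01 : octTab s 0 1 = (0 : Fin 8 → K) := rfl
  have t02 : octTab s 0 2 = (0 : Fin 8 → K) := rfl
  have t03 : octTab s 0 3 = s⁻¹^3 • bx 0 := rfl
  have t04 : octTab s 0 4 = (0 : Fin 8 → K) := rfl
  have t05 : octTab s 0 5 = s⁻¹^3 • bx 1 := rfl
  have t06 : octTab s 0 6 = s⁻¹^3 • bx 2 := rfl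
  have t07 : octTab s 0 7 = s⁻¹^3 • bx 4 := rfl
  have t10 : octTab s 1 0 = (0 : Fin 8 → K) := rfl
  have t11 : octTab s 1 1 = (0 : Fin 8 → K) := rfl
  have t12 : octTab s 1 2 = (-s⁻¹) • bx 0 := rfl
  have t13 : octTab s 1 3 = (0 : Fin 8 → K) := rfl
  have t14 : octTab s 1 4 = (-s⁻¹) • bx 1 := rfl
  have t15 : octTab s 1 5 = (0 : Fin 8 → K) := rfl
  have t16 : octTab s 1 6 = s⁻¹^3 • bx 3 := rfl
  have t17 : octTab s 1 7 = s⁻¹^3 • bx 5 := rfl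
  have t20 : octTab s 2 0 = (0 : Fin 8 → K) := rfl
  have t21 : octTab s 2 1 = s • bx 0 := rfl
  have t22 : octTab s 2 2 = (0 : Fin 8 → K) := rfl
  have t23 : octTab s 2 3 = (0 : Fin 8 → K) := rfl
  have t24 : octTab s 2 4 = (-s⁻¹) • bx 2 := rfl
  have t25 : octTab s 2 5 = (-s⁻¹) • bx 3 := rfl
  have t26 : octTab s 2 6 = (0 : Fin 8 → K) := rfl
  have t27 : octTab s 2 7 = s⁻¹^3 • bx 6 := rfl
  have t30 : octTab s 3 0 = (0 : Fin 8 → K) := rfl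
  have t31 : octTab s 3 1 = s • bx 1 := rfl
  have t32 : octTab s 3 2 = s • bx 2 := rfl
  have t33 : octTab s 3 3 = s • bx 3 := rfl
  have t34 : octTab s 3 4 = (0 : Fin 8 → K) := rfl
  have t35 : octTab s 3 5 = (0 : Fin 8 → K) := rfl
  have t36 : octTab s 3 6 = (0 : Fin 8 → K) := rfl
  have t37 : octTab s 3 7 = s⁻¹^3 • bx 7 := rfl
  have t40 : octTab s 4 0 = (-s^3) • bx 0 := rfl
  have t41 : octTab s 4 1 = (0 : Fin 8 → K) := rfl
  have t42 : octTab s 4 2 = (0 : Fin 8 → K) := rfl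
  have t43 : octTab s 4 3 = (0 : Fin 8 → K) := rfl
  have t44 : octTab s 4 4 = (-s⁻¹) • bx 4 := rfl
  have t45 : octTab s 4 5 = (-s⁻¹) • bx 5 := rfl
  have t46 : octTab s 4 6 = (-s⁻¹) • bx 6 := rfl
  have t47 : octTab s 4 7 = (0 : Fin 8 → K) := rfl
  have t50 : octTab s 5 0 = (-s^3) • bx 1 := rfl
  have t51 : octTab s 5 1 = (0 : Fin 8 → K) := rfl
  have t52 : octTab s 5 2 = s • bx 4 := rfl
  have t53 : octTab s 5 3 = s • bx 5 := rfl
  have t54 : octTab s 5 4 = (0 : Fin 8 → K) := rfl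
  have t55 : octTab s 5 5 = (0 : Fin 8 → K) := rfl
  have t56 : octTab s 5 6 = (-s⁻¹) • bx 7 := rfl
  have t57 : octTab s 5 7 = (0 : Fin 8 → K) := rfl
  have t60 : octTab s 6 0 = (-s^3) • bx 2 := rfl
  have t61 : octTab s 6 1 = (-s^3) • bx 4 := rfl
  have t62 : octTab s 6 2 = (0 : Fin 8 → K) := rfl
  have t63 : octTab s 6 3 = s • bx 6 := rfl
  have t64 : octTab s 6 4 = (0 : Fin 8 → K) := rfl
  have t65 : octTab s 6 5 = s • bx 7 := rfl
  have t66 : octTab s 6 6 = (0 : Fin 8 → K) := rfl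
  have t67 : octTab s 6 7 = (0 : Fin 8 → K) := rfl
  have t70 : octTab s 7 0 = (-s^3) • bx 3 := rfl
  have t71 : octTab s 7 1 = (-s^3) • bx 5 := rfl
  have t72 : octTab s 7 2 = (-s^3) • bx 6 := rfl
  have t73 : octTab s 7 3 = (0 : Fin 8 → K) := rfl
  have t74 : octTab s 7 4 = (-s^3) • bx 7 := rfl
  have t75 : octTab s 7 5 = (0 : Fin 8 → K) := rfl
  have t76 : octTab s 7 6 = (0 : Fin 8 → K) := rfl
  have t77 : octTab s 7 7 = (0 : Fin 8 → K) := rfl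
  have dTab : ∀ i j : Fin 8, d (octTab s i j) = (lam i + lam j) • octTab s i j := by
    intro i j
    fin_cases i <;> fin_cases j <;>
      simp [t00, t01, t02, t03, t04, t05, t06, t07, t10, t11, t12, t13, t14, t15, t16, t17, t20, t21, t22, t23, t24, t25, t26, t27, t30, t31, t32, t33, t34, t35, t36, t37, t40, t41, t42, t43, t44, t45, t46, t47, t50, t51, t52, t53, t54, t55, t56, t57, t60, t61, t62, t63, t64, t65, t66, t67, t70, t71, t72, t73, t74, t75, t76, t77, l0, l1, l2, l3, l4, l5, l6, l7,
        map_smul, map_zero, smul_zero, h1, h2, h3, hd3, hd4, h5, h6, h7] <;>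
      match_scalars <;> ring
  have hd : ∀ x : Fin 8 → K, d x = fun i => lam i * x i := by
    intro x
    have hx : x = ∑ i : Fin 8, x i • bx i := by
      funext j
      simp [bx, Pi.single_apply, Finset.sum_apply]
    conv_lhs => rw [hx]
    rw [map_sum]
    simp only [map_smul, Fin.sum_univ_eight, h1, h2, h3, hd3, hd4, h5, h6, h7]
    funext j
    fin_cases j <;>
      simp [bx, l0, l1, l2, l3, l4, l5, l6, l7, Pi.single_apply] <;> ring
  intro x y
  calc d (octMul s x y)
      = ∑ i : Fin 8, ∑ j : Fin 8, (x i * y j) • d (octTab s i j) := by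
        simp only [octMul, map_sum, map_smul]
    _ = ∑ i : Fin 8, ∑ j : Fin 8,
          ((d x i * y j) • octTab s i j + (x i * d y j) • octTab s i j) := by
        refine Finset.sum_congr rfl fun i _ => Finset.sum_congr rfl fun j _ => ?_
        rw [dTab i j, hd x, hd y]
        match_scalars <;> ring
    _ = octMul s (d x) y + octMul s x (d y) := by
        simp only [octMul, Finset.sum_add_distrib]
end

section
/- Every derivation of the quantum octonion algebra O_q annihilates the idempotents e₁ = q^{-1/2}x₄ and e₂ = −q^{1/2}x₋₄, provided q³ ≠ 1 (q not a cube root of unity). -/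
section Aux
variable {K : Type*} [Field K] (s : K)

private lemma octMul_bxr (a : Fin 8 → K) (r : Fin 8) :
    octMul s a (bx r) = ∑ i : Fin 8, a i • octTab s i r := by
  unfold octMul
  refine Finset.sum_congr rfl fun i _ => ?_
  refine (Finset.sum_eq_single r ?_ ?_).trans ?_
  · intro j _ hj; simp [bx, Pi.single_apply, hj]
  · intro h; exact absurd (Finset.mem_univ r) h
  · simp [bx]

private lemma octMul_bxl (b : Fin 8 → K) (p : Fin 8) :
    octMul s (bx p) b = ∑ j : Fin 8, b j • octTab s p j := by
  unfold octMul
  refine (Finset.sum_eq_single p ?_ ?_).trans ?_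
  · intro i _ hi
    refine Finset.sum_eq_zero fun j _ => ?_
    simp [bx, Pi.single_apply, hi]
  · intro h; exact absurd (Finset.mem_univ p) h
  · refine Finset.sum_congr rfl fun j _ => ?_
    simp [bx]

private lemma octMul_bx_bx (p r : Fin 8) :
    octMul (K := K) s (bx p) (bx r) = octTab s p r := by
  rw [octMul_bxr]
  refine (Finset.sum_eq_single p ?_ ?_).trans ?_
  · intro i _ hi; simp [bx, Pi.single_apply, hi]
  · intro h; exact absurd (Finset.mem_univ p) h
  · simp [bx]

end Aux

set_option maxHeartbeats 4000000 in
/-- If `q = s²` is not a cube root of unity, every derivation of the quantum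
octonion algebra annihilates the idempotents `e₁ = q^{-1/2}x₄`, `e₂ = −q^{1/2}x₋₄`. -/
theorem quantum_octonion_derivation_annihilates_idempotents
    {K : Type*} [Field K] (s : K) (hs : s ≠ 0) (h3 : (s ^ 2) ^ 3 ≠ 1)
    (d : (Fin 8 → K) →ₗ[K] (Fin 8 → K))
    (hder : ∀ a b : Fin 8 → K, d (octMul s a b) = octMul s (d a) b + octMul s a (d b)) :
    d (s⁻¹ • bx 3) = 0 ∧ d ((-s) • bx 4) = 0 := by
  have hsu : s * s⁻¹ = 1 := mul_inv_cancel₀ hs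
  have h2 : s ^ 2 - 1 ≠ 0 := by
    intro h
    apply h3
    have hs2 : s ^ 2 = 1 := by linear_combination h
    rw [hs2, one_pow]
  have V00 := by
    have h := hder (bx 0) (bx 0)
    rw [octMul_bx_bx, octMul_bxr, octMul_bxl] at h
    rw [show octTab (K:=K) s 0 0 = 0 from rfl, map_zero] at h
    rw [Fin.sum_univ_eight, Fin.sum_univ_eight] at h
    exact h
  have V01 := by
    have h := hder (bx 0) (bx 1)
    rw [octMul_bx_bx, octMul_bxr, octMul_bxl] at h
    rw [show octTab (K:=K) s 0 1 = 0 from rfl, map_zero] at h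
    rw [Fin.sum_univ_eight, Fin.sum_univ_eight] at h
    exact h
  have V02 := by
    have h := hder (bx 0) (bx 2)
    rw [octMul_bx_bx, octMul_bxr, octMul_bxl] at h
    rw [show octTab (K:=K) s 0 2 = 0 from rfl, map_zero] at h
    rw [Fin.sum_univ_eight, Fin.sum_univ_eight] at h
    exact h
  have V03 := by
    have h := hder (bx 0) (bx 3)
    rw [octMul_bx_bx, octMul_bxr, octMul_bxl] at h
    rw [show octTab (K:=K) s 0 3 = s⁻¹^3 • bx 0 from rfl, map_smul] at h
    rw [Fin.sum_univ_eight, Fin.sum_univ_eight] at h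
    exact h
  have V04 := by
    have h := hder (bx 0) (bx 4)
    rw [octMul_bx_bx, octMul_bxr, octMul_bxl] at h
    rw [show octTab (K:=K) s 0 4 = 0 from rfl, map_zero] at h
    rw [Fin.sum_univ_eight, Fin.sum_univ_eight] at h
    exact h
  have V05 := by
    have h := hder (bx 0) (bx 5)
    rw [octMul_bx_bx, octMul_bxr, octMul_bxl] at h
    rw [show octTab (K:=K) s 0 5 = s⁻¹^3 • bx 1 from rfl, map_smul] at h
    rw [Fin.sum_univ_eight, Fin.sum_univ_eight] at h
    exact h
  have V06 := by
    have h := hder (bx 0) (bx 6)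
    rw [octMul_bx_bx, octMul_bxr, octMul_bxl] at h
    rw [show octTab (K:=K) s 0 6 = s⁻¹^3 • bx 2 from rfl, map_smul] at h
    rw [Fin.sum_univ_eight, Fin.sum_univ_eight] at h
    exact h
  have V12 := by
    have h := hder (bx 1) (bx 2)
    rw [octMul_bx_bx, octMul_bxr, octMul_bxl] at h
    rw [show octTab (K:=K) s 1 2 = (-s⁻¹) • bx 0 from rfl, map_smul] at h
    rw [Fin.sum_univ_eight, Fin.sum_univ_eight] at h
    exact h
  have V13 := by
    have h := hder (bx 1) (bx 3)
    rw [octMul_bx_bx, octMul_bxr, octMul_bxl] at h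
    rw [show octTab (K:=K) s 1 3 = 0 from rfl, map_zero] at h
    rw [Fin.sum_univ_eight, Fin.sum_univ_eight] at h
    exact h
  have V14 := by
    have h := hder (bx 1) (bx 4)
    rw [octMul_bx_bx, octMul_bxr, octMul_bxl] at h
    rw [show octTab (K:=K) s 1 4 = (-s⁻¹) • bx 1 from rfl, map_smul] at h
    rw [Fin.sum_univ_eight, Fin.sum_univ_eight] at h
    exact h
  have V16 := by
    have h := hder (bx 1) (bx 6)
    rw [octMul_bx_bx, octMul_bxr, octMul_bxl] at h
    rw [show octTab (K:=K) s 1 6 = s⁻¹^3 • bx 3 from rfl, map_smul] at h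
    rw [Fin.sum_univ_eight, Fin.sum_univ_eight] at h
    exact h
  have V23 := by
    have h := hder (bx 2) (bx 3)
    rw [octMul_bx_bx, octMul_bxr, octMul_bxl] at h
    rw [show octTab (K:=K) s 2 3 = 0 from rfl, map_zero] at h
    rw [Fin.sum_univ_eight, Fin.sum_univ_eight] at h
    exact h
  have V24 := by
    have h := hder (bx 2) (bx 4)
    rw [octMul_bx_bx, octMul_bxr, octMul_bxl] at h
    rw [show octTab (K:=K) s 2 4 = (-s⁻¹) • bx 2 from rfl, map_smul] at h
    rw [Fin.sum_univ_eight, Fin.sum_univ_eight] at h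
    exact h
  have V25 := by
    have h := hder (bx 2) (bx 5)
    rw [octMul_bx_bx, octMul_bxr, octMul_bxl] at h
    rw [show octTab (K:=K) s 2 5 = (-s⁻¹) • bx 3 from rfl, map_smul] at h
    rw [Fin.sum_univ_eight, Fin.sum_univ_eight] at h
    exact h
  have V35 := by
    have h := hder (bx 3) (bx 5)
    rw [octMul_bx_bx, octMul_bxr, octMul_bxl] at h
    rw [show octTab (K:=K) s 3 5 = 0 from rfl, map_zero] at h
    rw [Fin.sum_univ_eight, Fin.sum_univ_eight] at h
    exact h
  have V43 := by
    have h := hder (bx 4) (bx 3)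
    rw [octMul_bx_bx, octMul_bxr, octMul_bxl] at h
    rw [show octTab (K:=K) s 4 3 = 0 from rfl, map_zero] at h
    rw [Fin.sum_univ_eight, Fin.sum_univ_eight] at h
    exact h
  have E000 : (0:K) = (d (bx 0) 0 * 0 + d (bx 0) 1 * 0 + d (bx 0) 2 * 0 + d (bx 0) 3 * 0 + d (bx 0) 4 * ((-s^3) * 1) + d (bx 0) 5 * ((-s^3) * 0) + d (bx 0) 6 * ((-s^3) * 0) + d (bx 0) 7 * ((-s^3) * 0)) + (d (bx 0) 0 * 0 + d (bx 0) 1 * 0 + d (bx 0) 2 * 0 + d (bx 0) 3 * (s⁻¹^3 * 1) + d (bx 0) 4 * 0 + d (bx 0) 5 * (s⁻¹^3 * 0) + d (bx 0) 6 * (s⁻¹^3 * 0) + d (bx 0) 7 * (s⁻¹^3 * 0)) := congrFun V00 (0 : Fin 8)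
  have E010 : (0:K) = (d (bx 0) 0 * 0 + d (bx 0) 1 * 0 + d (bx 0) 2 * (s * 1) + d (bx 0) 3 * (s * 0) + d (bx 0) 4 * 0 + d (bx 0) 5 * 0 + d (bx 0) 6 * ((-s^3) * 0) + d (bx 0) 7 * ((-s^3) * 0)) + (d (bx 1) 0 * 0 + d (bx 1) 1 * 0 + d (bx 1) 2 * 0 + d (bx 1) 3 * (s⁻¹^3 * 1) + d (bx 1) 4 * 0 + d (bx 1) 5 * (s⁻¹^3 * 0) + d (bx 1) 6 * (s⁻¹^3 * 0) + d (bx 1) 7 * (s⁻¹^3 * 0)) := congrFun V01 (0 : Fin 8)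
  have E020 : (0:K) = (d (bx 0) 0 * 0 + d (bx 0) 1 * ((-s⁻¹) * 1) + d (bx 0) 2 * 0 + d (bx 0) 3 * (s * 0) + d (bx 0) 4 * 0 + d (bx 0) 5 * (s * 0) + d (bx 0) 6 * 0 + d (bx 0) 7 * ((-s^3) * 0)) + (d (bx 2) 0 * 0 + d (bx 2) 1 * 0 + d (bx 2) 2 * 0 + d (bx 2) 3 * (s⁻¹^3 * 1) + d (bx 2) 4 * 0 + d (bx 2) 5 * (s⁻¹^3 * 0) + d (bx 2) 6 * (s⁻¹^3 * 0) + d (bx 2) 7 * (s⁻¹^3 * 0)) := congrFun V02 (0 : Fin 8)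
  have E022 : (0:K) = (d (bx 0) 0 * 0 + d (bx 0) 1 * ((-s⁻¹) * 0) + d (bx 0) 2 * 0 + d (bx 0) 3 * (s * 1) + d (bx 0) 4 * 0 + d (bx 0) 5 * (s * 0) + d (bx 0) 6 * 0 + d (bx 0) 7 * ((-s^3) * 0)) + (d (bx 2) 0 * 0 + d (bx 2) 1 * 0 + d (bx 2) 2 * 0 + d (bx 2) 3 * (s⁻¹^3 * 0) + d (bx 2) 4 * 0 + d (bx 2) 5 * (s⁻¹^3 * 0) + d (bx 2) 6 * (s⁻¹^3 * 1) + d (bx 2) 7 * (s⁻¹^3 * 0)) := congrFun V02 (2 : Fin 8)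
  have E030 : s⁻¹^3 * d (bx 0) 0 = (d (bx 0) 0 * (s⁻¹^3 * 1) + d (bx 0) 1 * 0 + d (bx 0) 2 * 0 + d (bx 0) 3 * (s * 0) + d (bx 0) 4 * 0 + d (bx 0) 5 * (s * 0) + d (bx 0) 6 * (s * 0) + d (bx 0) 7 * 0) + (d (bx 3) 0 * 0 + d (bx 3) 1 * 0 + d (bx 3) 2 * 0 + d (bx 3) 3 * (s⁻¹^3 * 1) + d (bx 3) 4 * 0 + d (bx 3) 5 * (s⁻¹^3 * 0) + d (bx 3) 6 * (s⁻¹^3 * 0) + d (bx 3) 7 * (s⁻¹^3 * 0)) := congrFun V03 (0 : Fin 8)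
  have E031 : s⁻¹^3 * d (bx 0) 1 = (d (bx 0) 0 * (s⁻¹^3 * 0) + d (bx 0) 1 * 0 + d (bx 0) 2 * 0 + d (bx 0) 3 * (s * 0) + d (bx 0) 4 * 0 + d (bx 0) 5 * (s * 0) + d (bx 0) 6 * (s * 0) + d (bx 0) 7 * 0) + (d (bx 3) 0 * 0 + d (bx 3) 1 * 0 + d (bx 3) 2 * 0 + d (bx 3) 3 * (s⁻¹^3 * 0) + d (bx 3) 4 * 0 + d (bx 3) 5 * (s⁻¹^3 * 1) + d (bx 3) 6 * (s⁻¹^3 * 0) + d (bx 3) 7 * (s⁻¹^3 * 0)) := congrFun V03 (1 : Fin 8)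
  have E032 : s⁻¹^3 * d (bx 0) 2 = (d (bx 0) 0 * (s⁻¹^3 * 0) + d (bx 0) 1 * 0 + d (bx 0) 2 * 0 + d (bx 0) 3 * (s * 0) + d (bx 0) 4 * 0 + d (bx 0) 5 * (s * 0) + d (bx 0) 6 * (s * 0) + d (bx 0) 7 * 0) + (d (bx 3) 0 * 0 + d (bx 3) 1 * 0 + d (bx 3) 2 * 0 + d (bx 3) 3 * (s⁻¹^3 * 0) + d (bx 3) 4 * 0 + d (bx 3) 5 * (s⁻¹^3 * 0) + d (bx 3) 6 * (s⁻¹^3 * 1) + d (bx 3) 7 * (s⁻¹^3 * 0)) := congrFun V03 (2 : Fin 8)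
  have E034 : s⁻¹^3 * d (bx 0) 4 = (d (bx 0) 0 * (s⁻¹^3 * 0) + d (bx 0) 1 * 0 + d (bx 0) 2 * 0 + d (bx 0) 3 * (s * 0) + d (bx 0) 4 * 0 + d (bx 0) 5 * (s * 0) + d (bx 0) 6 * (s * 0) + d (bx 0) 7 * 0) + (d (bx 3) 0 * 0 + d (bx 3) 1 * 0 + d (bx 3) 2 * 0 + d (bx 3) 3 * (s⁻¹^3 * 0) + d (bx 3) 4 * 0 + d (bx 3) 5 * (s⁻¹^3 * 0) + d (bx 3) 6 * (s⁻¹^3 * 0) + d (bx 3) 7 * (s⁻¹^3 * 1)) := congrFun V03 (4 : Fin 8)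
  have E040 : (0:K) = (d (bx 0) 0 * 0 + d (bx 0) 1 * ((-s⁻¹) * 0) + d (bx 0) 2 * ((-s⁻¹) * 0) + d (bx 0) 3 * 0 + d (bx 0) 4 * ((-s⁻¹) * 0) + d (bx 0) 5 * 0 + d (bx 0) 6 * 0 + d (bx 0) 7 * ((-s^3) * 0)) + (d (bx 4) 0 * 0 + d (bx 4) 1 * 0 + d (bx 4) 2 * 0 + d (bx 4) 3 * (s⁻¹^3 * 1) + d (bx 4) 4 * 0 + d (bx 4) 5 * (s⁻¹^3 * 0) + d (bx 4) 6 * (s⁻¹^3 * 0) + d (bx 4) 7 * (s⁻¹^3 * 0)) := congrFun V04 (0 : Fin 8)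
  have E041 : (0:K) = (d (bx 0) 0 * 0 + d (bx 0) 1 * ((-s⁻¹) * 1) + d (bx 0) 2 * ((-s⁻¹) * 0) + d (bx 0) 3 * 0 + d (bx 0) 4 * ((-s⁻¹) * 0) + d (bx 0) 5 * 0 + d (bx 0) 6 * 0 + d (bx 0) 7 * ((-s^3) * 0)) + (d (bx 4) 0 * 0 + d (bx 4) 1 * 0 + d (bx 4) 2 * 0 + d (bx 4) 3 * (s⁻¹^3 * 0) + d (bx 4) 4 * 0 + d (bx 4) 5 * (s⁻¹^3 * 1) + d (bx 4) 6 * (s⁻¹^3 * 0) + d (bx 4) 7 * (s⁻¹^3 * 0)) := congrFun V04 (1 : Fin 8)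
  have E042 : (0:K) = (d (bx 0) 0 * 0 + d (bx 0) 1 * ((-s⁻¹) * 0) + d (bx 0) 2 * ((-s⁻¹) * 1) + d (bx 0) 3 * 0 + d (bx 0) 4 * ((-s⁻¹) * 0) + d (bx 0) 5 * 0 + d (bx 0) 6 * 0 + d (bx 0) 7 * ((-s^3) * 0)) + (d (bx 4) 0 * 0 + d (bx 4) 1 * 0 + d (bx 4) 2 * 0 + d (bx 4) 3 * (s⁻¹^3 * 0) + d (bx 4) 4 * 0 + d (bx 4) 5 * (s⁻¹^3 * 0) + d (bx 4) 6 * (s⁻¹^3 * 1) + d (bx 4) 7 * (s⁻¹^3 * 0)) := congrFun V04 (2 : Fin 8)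
  have E044 : (0:K) = (d (bx 0) 0 * 0 + d (bx 0) 1 * ((-s⁻¹) * 0) + d (bx 0) 2 * ((-s⁻¹) * 0) + d (bx 0) 3 * 0 + d (bx 0) 4 * ((-s⁻¹) * 1) + d (bx 0) 5 * 0 + d (bx 0) 6 * 0 + d (bx 0) 7 * ((-s^3) * 0)) + (d (bx 4) 0 * 0 + d (bx 4) 1 * 0 + d (bx 4) 2 * 0 + d (bx 4) 3 * (s⁻¹^3 * 0) + d (bx 4) 4 * 0 + d (bx 4) 5 * (s⁻¹^3 * 0) + d (bx 4) 6 * (s⁻¹^3 * 0) + d (bx 4) 7 * (s⁻¹^3 * 1)) := congrFun V04 (4 : Fin 8)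
  have E053 : s⁻¹^3 * d (bx 1) 3 = (d (bx 0) 0 * (s⁻¹^3 * 0) + d (bx 0) 1 * 0 + d (bx 0) 2 * ((-s⁻¹) * 1) + d (bx 0) 3 * 0 + d (bx 0) 4 * ((-s⁻¹) * 0) + d (bx 0) 5 * 0 + d (bx 0) 6 * (s * 0) + d (bx 0) 7 * 0) + (d (bx 5) 0 * 0 + d (bx 5) 1 * 0 + d (bx 5) 2 * 0 + d (bx 5) 3 * (s⁻¹^3 * 0) + d (bx 5) 4 * 0 + d (bx 5) 5 * (s⁻¹^3 * 0) + d (bx 5) 6 * (s⁻¹^3 * 0) + d (bx 5) 7 * (s⁻¹^3 * 0)) := congrFun V05 (3 : Fin 8)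
  have E063 : s⁻¹^3 * d (bx 2) 3 = (d (bx 0) 0 * (s⁻¹^3 * 0) + d (bx 0) 1 * (s⁻¹^3 * 1) + d (bx 0) 2 * 0 + d (bx 0) 3 * 0 + d (bx 0) 4 * ((-s⁻¹) * 0) + d (bx 0) 5 * ((-s⁻¹) * 0) + d (bx 0) 6 * 0 + d (bx 0) 7 * 0) + (d (bx 6) 0 * 0 + d (bx 6) 1 * 0 + d (bx 6) 2 * 0 + d (bx 6) 3 * (s⁻¹^3 * 0) + d (bx 6) 4 * 0 + d (bx 6) 5 * (s⁻¹^3 * 0) + d (bx 6) 6 * (s⁻¹^3 * 0) + d (bx 6) 7 * (s⁻¹^3 * 0)) := congrFun V06 (3 : Fin 8)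
  have E123 : (-s⁻¹) * d (bx 0) 3 = (d (bx 1) 0 * 0 + d (bx 1) 1 * ((-s⁻¹) * 0) + d (bx 1) 2 * 0 + d (bx 1) 3 * (s * 0) + d (bx 1) 4 * 0 + d (bx 1) 5 * (s * 0) + d (bx 1) 6 * 0 + d (bx 1) 7 * ((-s^3) * 0)) + (d (bx 2) 0 * 0 + d (bx 2) 1 * 0 + d (bx 2) 2 * ((-s⁻¹) * 0) + d (bx 2) 3 * 0 + d (bx 2) 4 * ((-s⁻¹) * 0) + d (bx 2) 5 * 0 + d (bx 2) 6 * (s⁻¹^3 * 1) + d (bx 2) 7 * (s⁻¹^3 * 0)) := congrFun V12 (3 : Fin 8)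
  have E130 : (0:K) = (d (bx 1) 0 * (s⁻¹^3 * 1) + d (bx 1) 1 * 0 + d (bx 1) 2 * 0 + d (bx 1) 3 * (s * 0) + d (bx 1) 4 * 0 + d (bx 1) 5 * (s * 0) + d (bx 1) 6 * (s * 0) + d (bx 1) 7 * 0) + (d (bx 3) 0 * 0 + d (bx 3) 1 * 0 + d (bx 3) 2 * ((-s⁻¹) * 1) + d (bx 3) 3 * 0 + d (bx 3) 4 * ((-s⁻¹) * 0) + d (bx 3) 5 * 0 + d (bx 3) 6 * (s⁻¹^3 * 0) + d (bx 3) 7 * (s⁻¹^3 * 0)) := congrFun V13 (0 : Fin 8)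
  have E131 : (0:K) = (d (bx 1) 0 * (s⁻¹^3 * 0) + d (bx 1) 1 * 0 + d (bx 1) 2 * 0 + d (bx 1) 3 * (s * 0) + d (bx 1) 4 * 0 + d (bx 1) 5 * (s * 0) + d (bx 1) 6 * (s * 0) + d (bx 1) 7 * 0) + (d (bx 3) 0 * 0 + d (bx 3) 1 * 0 + d (bx 3) 2 * ((-s⁻¹) * 0) + d (bx 3) 3 * 0 + d (bx 3) 4 * ((-s⁻¹) * 1) + d (bx 3) 5 * 0 + d (bx 3) 6 * (s⁻¹^3 * 0) + d (bx 3) 7 * (s⁻¹^3 * 0)) := congrFun V13 (1 : Fin 8)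
  have E140 : (-s⁻¹) * d (bx 1) 0 = (d (bx 1) 0 * 0 + d (bx 1) 1 * ((-s⁻¹) * 0) + d (bx 1) 2 * ((-s⁻¹) * 0) + d (bx 1) 3 * 0 + d (bx 1) 4 * ((-s⁻¹) * 0) + d (bx 1) 5 * 0 + d (bx 1) 6 * 0 + d (bx 1) 7 * ((-s^3) * 0)) + (d (bx 4) 0 * 0 + d (bx 4) 1 * 0 + d (bx 4) 2 * ((-s⁻¹) * 1) + d (bx 4) 3 * 0 + d (bx 4) 4 * ((-s⁻¹) * 0) + d (bx 4) 5 * 0 + d (bx 4) 6 * (s⁻¹^3 * 0) + d (bx 4) 7 * (s⁻¹^3 * 0)) := congrFun V14 (0 : Fin 8)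
  have E141 : (-s⁻¹) * d (bx 1) 1 = (d (bx 1) 0 * 0 + d (bx 1) 1 * ((-s⁻¹) * 1) + d (bx 1) 2 * ((-s⁻¹) * 0) + d (bx 1) 3 * 0 + d (bx 1) 4 * ((-s⁻¹) * 0) + d (bx 1) 5 * 0 + d (bx 1) 6 * 0 + d (bx 1) 7 * ((-s^3) * 0)) + (d (bx 4) 0 * 0 + d (bx 4) 1 * 0 + d (bx 4) 2 * ((-s⁻¹) * 0) + d (bx 4) 3 * 0 + d (bx 4) 4 * ((-s⁻¹) * 1) + d (bx 4) 5 * 0 + d (bx 4) 6 * (s⁻¹^3 * 0) + d (bx 4) 7 * (s⁻¹^3 * 0)) := congrFun V14 (1 : Fin 8)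
  have E162 : s⁻¹^3 * d (bx 3) 2 = (d (bx 1) 0 * (s⁻¹^3 * 1) + d (bx 1) 1 * (s⁻¹^3 * 0) + d (bx 1) 2 * 0 + d (bx 1) 3 * 0 + d (bx 1) 4 * ((-s⁻¹) * 0) + d (bx 1) 5 * ((-s⁻¹) * 0) + d (bx 1) 6 * 0 + d (bx 1) 7 * 0) + (d (bx 6) 0 * 0 + d (bx 6) 1 * 0 + d (bx 6) 2 * ((-s⁻¹) * 0) + d (bx 6) 3 * 0 + d (bx 6) 4 * ((-s⁻¹) * 0) + d (bx 6) 5 * 0 + d (bx 6) 6 * (s⁻¹^3 * 0) + d (bx 6) 7 * (s⁻¹^3 * 0)) := congrFun V16 (2 : Fin 8)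
  have E230 : (0:K) = (d (bx 2) 0 * (s⁻¹^3 * 1) + d (bx 2) 1 * 0 + d (bx 2) 2 * 0 + d (bx 2) 3 * (s * 0) + d (bx 2) 4 * 0 + d (bx 2) 5 * (s * 0) + d (bx 2) 6 * (s * 0) + d (bx 2) 7 * 0) + (d (bx 3) 0 * 0 + d (bx 3) 1 * (s * 1) + d (bx 3) 2 * 0 + d (bx 3) 3 * 0 + d (bx 3) 4 * ((-s⁻¹) * 0) + d (bx 3) 5 * ((-s⁻¹) * 0) + d (bx 3) 6 * 0 + d (bx 3) 7 * (s⁻¹^3 * 0)) := congrFun V23 (0 : Fin 8)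
  have E240 : (-s⁻¹) * d (bx 2) 0 = (d (bx 2) 0 * 0 + d (bx 2) 1 * ((-s⁻¹) * 0) + d (bx 2) 2 * ((-s⁻¹) * 0) + d (bx 2) 3 * 0 + d (bx 2) 4 * ((-s⁻¹) * 0) + d (bx 2) 5 * 0 + d (bx 2) 6 * 0 + d (bx 2) 7 * ((-s^3) * 0)) + (d (bx 4) 0 * 0 + d (bx 4) 1 * (s * 1) + d (bx 4) 2 * 0 + d (bx 4) 3 * 0 + d (bx 4) 4 * ((-s⁻¹) * 0) + d (bx 4) 5 * ((-s⁻¹) * 0) + d (bx 4) 6 * 0 + d (bx 4) 7 * (s⁻¹^3 * 0)) := congrFun V24 (0 : Fin 8)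
  have E250 : (-s⁻¹) * d (bx 3) 0 = (d (bx 2) 0 * (s⁻¹^3 * 0) + d (bx 2) 1 * 0 + d (bx 2) 2 * ((-s⁻¹) * 0) + d (bx 2) 3 * 0 + d (bx 2) 4 * ((-s⁻¹) * 0) + d (bx 2) 5 * 0 + d (bx 2) 6 * (s * 0) + d (bx 2) 7 * 0) + (d (bx 5) 0 * 0 + d (bx 5) 1 * (s * 1) + d (bx 5) 2 * 0 + d (bx 5) 3 * 0 + d (bx 5) 4 * ((-s⁻¹) * 0) + d (bx 5) 5 * ((-s⁻¹) * 0) + d (bx 5) 6 * 0 + d (bx 5) 7 * (s⁻¹^3 * 0)) := congrFun V25 (0 : Fin 8)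
  have E251 : (-s⁻¹) * d (bx 3) 1 = (d (bx 2) 0 * (s⁻¹^3 * 1) + d (bx 2) 1 * 0 + d (bx 2) 2 * ((-s⁻¹) * 0) + d (bx 2) 3 * 0 + d (bx 2) 4 * ((-s⁻¹) * 0) + d (bx 2) 5 * 0 + d (bx 2) 6 * (s * 0) + d (bx 2) 7 * 0) + (d (bx 5) 0 * 0 + d (bx 5) 1 * (s * 0) + d (bx 5) 2 * 0 + d (bx 5) 3 * 0 + d (bx 5) 4 * ((-s⁻¹) * 0) + d (bx 5) 5 * ((-s⁻¹) * 0) + d (bx 5) 6 * 0 + d (bx 5) 7 * (s⁻¹^3 * 0)) := congrFun V25 (1 : Fin 8)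
  have E351 : (0:K) = (d (bx 3) 0 * (s⁻¹^3 * 1) + d (bx 3) 1 * 0 + d (bx 3) 2 * ((-s⁻¹) * 0) + d (bx 3) 3 * 0 + d (bx 3) 4 * ((-s⁻¹) * 0) + d (bx 3) 5 * 0 + d (bx 3) 6 * (s * 0) + d (bx 3) 7 * 0) + (d (bx 5) 0 * 0 + d (bx 5) 1 * (s * 1) + d (bx 5) 2 * (s * 0) + d (bx 5) 3 * (s * 0) + d (bx 5) 4 * 0 + d (bx 5) 5 * 0 + d (bx 5) 6 * 0 + d (bx 5) 7 * (s⁻¹^3 * 0)) := congrFun V35 (1 : Fin 8)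
  have E430 : (0:K) = (d (bx 4) 0 * (s⁻¹^3 * 1) + d (bx 4) 1 * 0 + d (bx 4) 2 * 0 + d (bx 4) 3 * (s * 0) + d (bx 4) 4 * 0 + d (bx 4) 5 * (s * 0) + d (bx 4) 6 * (s * 0) + d (bx 4) 7 * 0) + (d (bx 3) 0 * ((-s^3) * 1) + d (bx 3) 1 * 0 + d (bx 3) 2 * 0 + d (bx 3) 3 * 0 + d (bx 3) 4 * ((-s⁻¹) * 0) + d (bx 3) 5 * ((-s⁻¹) * 0) + d (bx 3) 6 * ((-s⁻¹) * 0) + d (bx 3) 7 * 0) := congrFun V43 (0 : Fin 8)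
  have hD3_0 : d (bx 3) (0 : Fin 8) = 0 := by
    have hh : (s^0*(s^2-1)^1:K) * d (bx 3) (0 : Fin 8) = 0 := by
      linear_combination ((-1:K)*s^3) * E250 + ((1:K)*s^3) * E351 + (((1:K) + (1:K)*s*s⁻¹ + (-1:K)*s^2 + (1:K)*s^2*s⁻¹^2) * d (bx 3) 0) * hsu
    exact (mul_eq_zero.mp hh).resolve_left (mul_ne_zero (pow_ne_zero _ hs) (pow_ne_zero _ h2))
  have hD3_1 : d (bx 3) (1 : Fin 8) = 0 := by
    have hh : (s^0*(s^2-1)^1:K) * d (bx 3) (1 : Fin 8) = 0 := by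
      linear_combination ((-1:K)*s) * E230 + ((1:K)*s) * E251 + (((1:K)) * d (bx 3) 1) * hsu
    exact (mul_eq_zero.mp hh).resolve_left (mul_ne_zero (pow_ne_zero _ hs) (pow_ne_zero _ h2))
  have hD3_2 : d (bx 3) (2 : Fin 8) = 0 := by
    have hh : (s^0*(s^2-1)^1:K) * d (bx 3) (2 : Fin 8) = 0 := by
      linear_combination ((1:K)*s^3) * E130 + ((-1:K)*s^3) * E162 + (((1:K) + (1:K)*s*s⁻¹ + (-1:K)*s^2 + (1:K)*s^2*s⁻¹^2) * d (bx 3) 2) * hsu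
    exact (mul_eq_zero.mp hh).resolve_left (mul_ne_zero (pow_ne_zero _ hs) (pow_ne_zero _ h2))
  have hD3_3 : d (bx 3) (3 : Fin 8) = 0 := by
    have hh : (s^0*(s^2-1)^0:K) * d (bx 3) (3 : Fin 8) = 0 := by
      linear_combination ((-1:K)*s^3) * E030 + (((-1:K) + (-1:K)*s*s⁻¹ + (-1:K)*s^2*s⁻¹^2) * d (bx 3) 3) * hsu
    exact (mul_eq_zero.mp hh).resolve_left (mul_ne_zero (pow_ne_zero _ hs) (pow_ne_zero _ h2))
  have hD3_4 : d (bx 3) (4 : Fin 8) = 0 := by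
    have hh : (s^0*(s^2-1)^0:K) * d (bx 3) (4 : Fin 8) = 0 := by
      linear_combination ((1:K)*s) * E131 + (((-1:K)) * d (bx 3) 4) * hsu
    exact (mul_eq_zero.mp hh).resolve_left (mul_ne_zero (pow_ne_zero _ hs) (pow_ne_zero _ h2))
  have hD3_5 : d (bx 3) (5 : Fin 8) = 0 := by
    have hh : (s^0*(s^2-1)^1:K) * d (bx 3) (5 : Fin 8) = 0 := by
      linear_combination ((1:K)*s^3 + (-1:K)*s^5) * E031 + ((1:K)*s^3) * E063 + ((1:K)*s^3) * E020 + (((1:K)*s^3*s⁻¹ + (1:K)*s^4*s⁻¹^2) * d (bx 0) 1 + ((1:K) + (1:K)*s*s⁻¹ + (-1:K)*s^2 + (1:K)*s^2*s⁻¹^2 + (-1:K)*s^3*s⁻¹ + (-1:K)*s^4*s⁻¹^2) * d (bx 3) 5) * hsu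
    exact (mul_eq_zero.mp hh).resolve_left (mul_ne_zero (pow_ne_zero _ hs) (pow_ne_zero _ h2))
  have hD3_6 : d (bx 3) (6 : Fin 8) = 0 := by
    have hh : (s^0*(s^2-1)^1:K) * d (bx 3) (6 : Fin 8) = 0 := by
      linear_combination ((1:K)*s^3 + (-1:K)*s^5) * E032 + ((-1:K)*s) * E053 + ((-1:K)*s) * E010 + (((-1:K)*s*s⁻¹ + (1:K)*s^2 + (-1:K)*s^2*s⁻¹^2 + (1:K)*s^3*s⁻¹ + (1:K)*s^4*s⁻¹^2) * d (bx 0) 2 + ((1:K) + (1:K)*s*s⁻¹ + (-1:K)*s^2 + (1:K)*s^2*s⁻¹^2 + (-1:K)*s^3*s⁻¹ + (-1:K)*s^4*s⁻¹^2) * d (bx 3) 6) * hsu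
    exact (mul_eq_zero.mp hh).resolve_left (mul_ne_zero (pow_ne_zero _ hs) (pow_ne_zero _ h2))
  have hD3_7 : d (bx 3) (7 : Fin 8) = 0 := by
    have hh : (s^5*(s^2-1)^1:K) * d (bx 3) (7 : Fin 8) = 0 := by
      linear_combination ((1:K)*s^8 + (-1:K)*s^10) * E034 + ((1:K)) * E123 + ((-1:K)) * E022 + ((-1:K)*s^2 + (1:K)*s^4) * E000 + (((-1:K)*s^5 + (-1:K)*s^6*s⁻¹ + (1:K)*s^7 + (-1:K)*s^7*s⁻¹^2 + (1:K)*s^8*s⁻¹ + (1:K)*s^9*s⁻¹^2) * d (bx 0) 4 + ((1:K)*s^5 + (1:K)*s^6*s⁻¹ + (-1:K)*s^7 + (1:K)*s^7*s⁻¹^2 + (-1:K)*s^8*s⁻¹ + (-1:K)*s^9*s⁻¹^2) * d (bx 3) 7 + ((-1:K)*s⁻¹ + (1:K)*s + (-1:K)*s*s⁻¹^2 + (1:K)*s^2*s⁻¹ + (1:K)*s^3*s⁻¹^2) * d (bx 0) 3) * hsu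
    exact (mul_eq_zero.mp hh).resolve_left (mul_ne_zero (pow_ne_zero _ hs) (pow_ne_zero _ h2))
  have hD4_0 : d (bx 4) (0 : Fin 8) = 0 := by
    have hh : (s^0*(s^2-1)^1:K) * d (bx 4) (0 : Fin 8) = 0 := by
      linear_combination ((1:K)*s^3 + (-1:K)*s^5) * E430 + ((-1:K)*s^9) * E250 + ((1:K)*s^9) * E351 + (((1:K) + (1:K)*s*s⁻¹ + (-1:K)*s^2 + (1:K)*s^2*s⁻¹^2 + (-1:K)*s^3*s⁻¹ + (-1:K)*s^4*s⁻¹^2) * d (bx 4) 0 + ((1:K)*s^6 + (1:K)*s^7*s⁻¹ + (-1:K)*s^8 + (1:K)*s^8*s⁻¹^2) * d (bx 3) 0) * hsu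
    exact (mul_eq_zero.mp hh).resolve_left (mul_ne_zero (pow_ne_zero _ hs) (pow_ne_zero _ h2))
  have hD4_1 : d (bx 4) (1 : Fin 8) = 0 := by
    have hh : (s^1*(s^2-1)^1:K) * d (bx 4) (1 : Fin 8) = 0 := by
      linear_combination ((1:K)*s^4) * E251 + ((-1:K)*s^2) * E230 + ((1:K) + (-1:K)*s^2) * E240 + (((1:K)*s^3) * d (bx 3) 1 + ((-1:K)*s⁻¹ + (-1:K)*s*s⁻¹^2 + (1:K)*s^2*s⁻¹ + (1:K)*s^3*s⁻¹^2) * d (bx 2) 0) * hsu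
    exact (mul_eq_zero.mp hh).resolve_left (mul_ne_zero (pow_ne_zero _ hs) (pow_ne_zero _ h2))
  have hD4_2 : d (bx 4) (2 : Fin 8) = 0 := by
    have hh : (s^0*(s^2-1)^1:K) * d (bx 4) (2 : Fin 8) = 0 := by
      linear_combination ((-1:K)*s^5) * E162 + ((1:K)*s^3) * E130 + ((-1:K)*s + (1:K)*s^3) * E140 + (((1:K)*s^3*s⁻¹ + (1:K)*s^4*s⁻¹^2) * d (bx 3) 2 + ((1:K)*s*s⁻¹ + (1:K)*s^2*s⁻¹^2 + (-1:K)*s^3*s⁻¹ + (-1:K)*s^4*s⁻¹^2) * d (bx 1) 0 + ((1:K) + (-1:K)*s^2) * d (bx 4) 2) * hsu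
    exact (mul_eq_zero.mp hh).resolve_left (mul_ne_zero (pow_ne_zero _ hs) (pow_ne_zero _ h2))
  have hD4_3 : d (bx 4) (3 : Fin 8) = 0 := by
    have hh : (s^0*(s^2-1)^0:K) * d (bx 4) (3 : Fin 8) = 0 := by
      linear_combination ((-1:K)*s^3) * E040 + (((-1:K) + (-1:K)*s*s⁻¹ + (-1:K)*s^2*s⁻¹^2) * d (bx 4) 3) * hsu
    exact (mul_eq_zero.mp hh).resolve_left (mul_ne_zero (pow_ne_zero _ hs) (pow_ne_zero _ h2))
  have hD4_4 : d (bx 4) (4 : Fin 8) = 0 := by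
    have hh : (s^0*(s^2-1)^0:K) * d (bx 4) (4 : Fin 8) = 0 := by
      linear_combination ((1:K)*s) * E141 + (((-1:K)) * d (bx 4) 4) * hsu
    exact (mul_eq_zero.mp hh).resolve_left (mul_ne_zero (pow_ne_zero _ hs) (pow_ne_zero _ h2))
  have hD4_5 : d (bx 4) (5 : Fin 8) = 0 := by
    have hh : (s^0*(s^2-1)^1:K) * d (bx 4) (5 : Fin 8) = 0 := by
      linear_combination ((1:K)*s^5) * E063 + ((1:K)*s^5) * E020 + ((1:K)*s^3 + (-1:K)*s^5) * E041 + (((1:K)*s^3*s⁻¹ + (1:K)*s^4*s⁻¹^2) * d (bx 0) 1 + ((1:K) + (1:K)*s*s⁻¹ + (-1:K)*s^2 + (1:K)*s^2*s⁻¹^2 + (-1:K)*s^3*s⁻¹ + (-1:K)*s^4*s⁻¹^2) * d (bx 4) 5) * hsu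
    exact (mul_eq_zero.mp hh).resolve_left (mul_ne_zero (pow_ne_zero _ hs) (pow_ne_zero _ h2))
  have hD4_6 : d (bx 4) (6 : Fin 8) = 0 := by
    have hh : (s^0*(s^2-1)^1:K) * d (bx 4) (6 : Fin 8) = 0 := by
      linear_combination ((-1:K)*s^3) * E053 + ((-1:K)*s^3) * E010 + ((1:K)*s^3 + (-1:K)*s^5) * E042 + (((1:K)*s^4) * d (bx 0) 2 + ((1:K) + (1:K)*s*s⁻¹ + (-1:K)*s^2 + (1:K)*s^2*s⁻¹^2 + (-1:K)*s^3*s⁻¹ + (-1:K)*s^4*s⁻¹^2) * d (bx 4) 6) * hsu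
    exact (mul_eq_zero.mp hh).resolve_left (mul_ne_zero (pow_ne_zero _ hs) (pow_ne_zero _ h2))
  have hD4_7 : d (bx 4) (7 : Fin 8) = 0 := by
    have hh : (s^3*(s^2-1)^1:K) * d (bx 4) (7 : Fin 8) = 0 := by
      linear_combination ((1:K)) * E123 + ((-1:K)) * E022 + ((-1:K)*s^2 + (1:K)*s^4) * E000 + ((1:K)*s^6 + (-1:K)*s^8) * E044 + (((-1:K)*s⁻¹ + (1:K)*s + (-1:K)*s*s⁻¹^2 + (1:K)*s^2*s⁻¹ + (1:K)*s^3*s⁻¹^2) * d (bx 0) 3 + ((-1:K)*s^5 + (1:K)*s^7) * d (bx 0) 4 + ((1:K)*s^3 + (1:K)*s^4*s⁻¹ + (-1:K)*s^5 + (1:K)*s^5*s⁻¹^2 + (-1:K)*s^6*s⁻¹ + (-1:K)*s^7*s⁻¹^2) * d (bx 4) 7) * hsu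
    exact (mul_eq_zero.mp hh).resolve_left (mul_ne_zero (pow_ne_zero _ hs) (pow_ne_zero _ h2))
  have hb3 : (d (bx 3) : Fin 8 → K) = 0 := by
    funext k
    fin_cases k
    · exact hD3_0
    · exact hD3_1
    · exact hD3_2
    · exact hD3_3
    · exact hD3_4
    · exact hD3_5
    · exact hD3_6
    · exact hD3_7
  have hb4 : (d (bx 4) : Fin 8 → K) = 0 := by
    funext k
    fin_cases k
    · exact hD4_0
    · exact hD4_1
    · exact hD4_2
    · exact hD4_3
    · exact hD4_4
    · exact hD4_5
    · exact hD4_6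
    · exact hD4_7
  constructor
  · rw [map_smul, hb3, smul_zero]
  · rw [map_smul, hb4, smul_zero]
end

section
/- Setting h' = q²e₁ − q^{-2}e₂ in the algebra H'_q with the commutator product, one has [h',u] = 2u, [h',v] = −2v, [u,v] = h', and the element q²e₁ + q^{-2}e₂ is central in the commutator algebra; hence H'_q under the commutator is isomorphic to gl₂(K). -/
/-- Basis vectors of the 4-dimensional space; `0 ↦ e₁, 1 ↦ e₂, 2 ↦ u, 3 ↦ v`. -/
noncomputable def qb {K : Type*} [Field K] (k : Fin 4) : Fin 4 → K := Pi.single k 1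

/-- Structure constants of the quantum quaternion algebra `H'_q` (Table 7.2). -/
noncomputable def hqTab' {K : Type*} [Field K] (q : K) : Fin 4 → Fin 4 → Fin 4 → K :=
  ![![qb 0, 0, (q⁻¹ ^ 2) • qb 2, 0],
    ![0, qb 1, 0, (q ^ 2) • qb 3],
    ![0, (q ^ 2) • qb 2, 0, (q ^ 2) • qb 0],
    ![(q⁻¹ ^ 2) • qb 3, 0, (q⁻¹ ^ 2) • qb 1, 0]]

/-- The multiplication of the quantum quaternion algebra `H'_q` (Table 7.2). -/
noncomputable def hqMul' {K : Type*} [Field K] (q : K) (a b : Fin 4 → K) : Fin 4 → K :=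
  ∑ i : Fin 4, ∑ j : Fin 4, (a i * b j) • hqTab' q i j

lemma hqMul'_eq {K : Type*} [Field K] (q : K) (a b : Fin 4 → K) :
    hqMul' q a b = ![a 0 * b 0 + q ^ 2 * (a 2 * b 3),
      a 1 * b 1 + q⁻¹ ^ 2 * (a 3 * b 2),
      q⁻¹ ^ 2 * (a 0 * b 2) + q ^ 2 * (a 2 * b 1),
      q ^ 2 * (a 1 * b 3) + q⁻¹ ^ 2 * (a 3 * b 0)] := by
  funext i
  fin_cases i <;>
    simp [hqMul', hqTab', qb, Fin.sum_univ_four, Pi.single_apply,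
      Matrix.vecHead, Matrix.vecTail] <;> ring


noncomputable def qPhi {K : Type*} [Field K] (q : K) :
    (Fin 4 → K) →ₗ[K] Matrix (Fin 2) (Fin 2) K where
  toFun a := !![q⁻¹ ^ 2 * a 0, a 2; a 3, q ^ 2 * a 1]
  map_add' a b := by
    ext i j
    fin_cases i <;> fin_cases j <;> simp <;> ring
  map_smul' c a := by
    ext i j
    fin_cases i <;> fin_cases j <;> simp <;> ring

lemma qPhi_apply {K : Type*} [Field K] (q : K) (a : Fin 4 → K) :
    qPhi q a = !![q⁻¹ ^ 2 * a 0, a 2; a 3, q ^ 2 * a 1] := rfl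

set_option maxHeartbeats 1000000 in
/-- With `h' = q²e₁ − q⁻²e₂` in `H'_q` one has `[h',u] = 2u`, `[h',v] = −2v`,
`[u,v] = h'`; the element `q²e₁ + q⁻²e₂` is central in the commutator algebra;
hence `H'_q` under the commutator is isomorphic to `gl₂(K)`. -/
theorem quantum_quaternion_prime_gl2
    {K : Type*} [Field K] (q : K) (hq : q ≠ 0) (hchar : (2 : K) ≠ 0) :
    (hqMul' q ((q ^ 2) • qb 0 - (q⁻¹ ^ 2) • qb 1) (qb 2)
      - hqMul' q (qb 2) ((q ^ 2) • qb 0 - (q⁻¹ ^ 2) • qb 1) = (2 : K) • qb 2) ∧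
    (hqMul' q ((q ^ 2) • qb 0 - (q⁻¹ ^ 2) • qb 1) (qb 3)
      - hqMul' q (qb 3) ((q ^ 2) • qb 0 - (q⁻¹ ^ 2) • qb 1) = (-2 : K) • qb 3) ∧
    (hqMul' q (qb 2) (qb 3) - hqMul' q (qb 3) (qb 2)
      = (q ^ 2) • qb 0 - (q⁻¹ ^ 2) • qb 1) ∧
    (∀ a : Fin 4 → K,
      hqMul' q ((q ^ 2) • qb 0 + (q⁻¹ ^ 2) • qb 1) a
        - hqMul' q a ((q ^ 2) • qb 0 + (q⁻¹ ^ 2) • qb 1) = 0) ∧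
    ∃ φ : (Fin 4 → K) ≃ₗ[K] Matrix (Fin 2) (Fin 2) K,
      ∀ a b : Fin 4 → K,
        φ (hqMul' q a b - hqMul' q b a) = φ a * φ b - φ b * φ a := by
  have hq2 : q ^ 2 ≠ 0 := pow_ne_zero 2 hq
  have hiq : q⁻¹ ^ 2 = (q ^ 2)⁻¹ := by rw [inv_pow]
  refine ⟨?_, ?_, ?_, ?_, ?_⟩
  · funext i
    fin_cases i <;>
      simp [hqMul'_eq, qb, Pi.single_apply, hiq] <;> field_simp <;> ring
  · funext i
    fin_cases i <;>
      simp [hqMul'_eq, qb, Pi.single_apply, hiq] <;> field_simp <;> ring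
  · funext i
    fin_cases i <;> simp [hqMul'_eq, qb, Pi.single_apply]
  · intro a
    funext i
    fin_cases i <;>
      simp [hqMul'_eq, qb, Pi.single_apply, hiq] <;> (try field_simp) <;> (try ring)
  · refine ⟨{ qPhi q with
      invFun := fun M => ![q ^ 2 * M 0 0, q⁻¹ ^ 2 * M 1 1, M 0 1, M 1 0],
      left_inv := ?_, right_inv := ?_ }, ?_⟩
    · intro a
      funext i
      fin_cases i <;> simp [qPhi_apply, hiq] <;> field_simp
    · intro M
      ext i j
      fin_cases i <;> fin_cases j <;> simp [qPhi_apply, hiq] <;> field_simp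
    · intro a b
      show qPhi q _ = qPhi q a * qPhi q b - qPhi q b * qPhi q a
      ext i j
      fin_cases i <;> fin_cases j <;>
        simp [qPhi_apply, hqMul'_eq, Matrix.mul_apply, Fin.sum_univ_two, hiq] <;>
        field_simp <;> ring
end
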